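/- arXiv:2602.19435 — 3 statements merged into one kernel-verified Lean document; each statement's English description precedes it below -/
import Mathlib

section
/- Let P, P_K be rank-one projections on a Banach space with ϑ := ‖P−P_K‖ < 1. Let L, L_K be bounded operators with ‖L−L_K‖ ≤ ε, ‖L_K‖ ≤ C, such that L acts as the scalar λ on Ran P and L_K acts as λ_K on Ran P_K (i.e., Lx = λx for x ∈ Ran P, L_K x = λ_K x for x ∈ Ran P_K). Then |λ − λ_K| ≤ (ε(1+ϑ) + 2Cϑ)/(1−ϑ). -/
/-- Projector control of eigenvalues (rank-one case): if `L` acts as the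
scalar `λ` on the one-dimensional range of the projection `P`, `L_K` acts as
`λ_K` on the one-dimensional range of the projection `P_K`, `‖L - L_K‖ ≤ ε`,
`‖L_K‖ ≤ C`, and `ϑ := ‖P - P_K‖ < 1`, then
`|λ - λ_K| ≤ (ε(1+ϑ) + 2Cϑ)/(1-ϑ)`. -/
theorem projector_controls_eigenvalue
    {E : Type*} [NormedAddCommGroup E] [NormedSpace ℂ E]
    (L LK P PK : E →L[ℂ] E)
    (hP : P * P = P) (hPK : PK * PK = PK)
    (hrankP : Module.finrank ℂ (LinearMap.range (P : E →ₗ[ℂ] E)) = 1)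
    (hrankPK : Module.finrank ℂ (LinearMap.range (PK : E →ₗ[ℂ] E)) = 1)
    (lam lamK : ℂ)
    (hact : ∀ x ∈ LinearMap.range (P : E →ₗ[ℂ] E), L x = lam • x)
    (hactK : ∀ x ∈ LinearMap.range (PK : E →ₗ[ℂ] E), LK x = lamK • x)
    (ε C ϑ : ℝ)
    (hε : ‖L - LK‖ ≤ ε) (hC : ‖LK‖ ≤ C)
    (hϑdef : ϑ = ‖P - PK‖) (hϑ : ϑ < 1) :
    ‖lam - lamK‖ ≤ (ε * (1 + ϑ) + 2 * C * ϑ) / (1 - ϑ) := by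
  -- range of PK is nontrivial
  have hne : LinearMap.range (PK : E →ₗ[ℂ] E) ≠ ⊥ := by
    intro h
    rw [h] at hrankPK
    simp at hrankPK
  obtain ⟨v, hvmem, hv0⟩ := (Submodule.ne_bot_iff _).mp hne
  -- normalize
  set x : E := ‖v‖⁻¹ • (v : E) with hxdef
  have hvnorm : ‖v‖ ≠ 0 := norm_ne_zero_iff.mpr hv0
  have hxnorm : ‖x‖ = 1 := by
    rw [hxdef, norm_smul, norm_inv, norm_norm, inv_mul_cancel₀ hvnorm]
  have hxmem : x ∈ LinearMap.range (PK : E →ₗ[ℂ] E) := by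
    exact Submodule.smul_mem _ _ hvmem
  -- PK x = x
  obtain ⟨y, hy⟩ := hxmem
  have hPKx : PK x = x := by
    have h := DFunLike.congr_fun hPK y
    rw [ContinuousLinearMap.mul_apply] at h
    rw [ContinuousLinearMap.coe_coe] at hy
    rw [← hy]
    exact h
  have hxmem' : x ∈ LinearMap.range (PK : E →ₗ[ℂ] E) := ⟨x, hPKx⟩
  -- L acts as lam on P x
  have hLPx : L (P x) = lam • (P x) := hact _ ⟨x, rfl⟩
  have hLKx : LK x = lamK • x := hactK _ hxmem'
  -- key identity
  have key : (lam - lamK) • (P x)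
      = (L - LK) (P x) + LK ((P - PK) x) + (PK - P) (LK x) := by
    simp only [ContinuousLinearMap.sub_apply, map_sub, hLPx, hLKx, map_smul, hPKx]
    module
  have hϑ0 : 0 ≤ ϑ := hϑdef ▸ norm_nonneg _
  have hC0 : 0 ≤ C := le_trans (norm_nonneg _) hC
  have hε0 : 0 ≤ ε := le_trans (norm_nonneg _) hε
  have hPmPKx : ‖(P - PK) x‖ ≤ ϑ := by
    calc ‖(P - PK) x‖ ≤ ‖P - PK‖ * ‖x‖ := (P - PK).le_opNorm x
    _ = ϑ := by rw [hxnorm, hϑdef, mul_one]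
  -- bounds on ‖P x‖
  have hPx_ub : ‖P x‖ ≤ 1 + ϑ := by
    have : P x = x + (P - PK) x := by
      simp [ContinuousLinearMap.sub_apply, hPKx]
    rw [this]
    calc ‖x + (P - PK) x‖ ≤ ‖x‖ + ‖(P - PK) x‖ := norm_add_le _ _
    _ ≤ 1 + ϑ := by rw [hxnorm]; linarith
  have hPx_lb : 1 - ϑ ≤ ‖P x‖ := by
    have hx' : x = P x - (P - PK) x := by
      simp [ContinuousLinearMap.sub_apply, hPKx]
    have : ‖x‖ ≤ ‖P x‖ + ‖(P - PK) x‖ := by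
      calc ‖x‖ = ‖P x - (P - PK) x‖ := by rw [← hx']
      _ ≤ ‖P x‖ + ‖(P - PK) x‖ := norm_sub_le _ _
    rw [hxnorm] at this
    linarith
  -- bound the three terms
  have h1 : ‖(L - LK) (P x)‖ ≤ ε * (1 + ϑ) := by
    calc ‖(L - LK) (P x)‖ ≤ ‖L - LK‖ * ‖P x‖ := (L - LK).le_opNorm _
    _ ≤ ε * (1 + ϑ) := mul_le_mul hε hPx_ub (norm_nonneg _) hε0
  have h2 : ‖LK ((P - PK) x)‖ ≤ C * ϑ := by
    calc ‖LK ((P - PK) x)‖ ≤ ‖LK‖ * ‖(P - PK) x‖ := LK.le_opNorm _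
    _ ≤ C * ϑ := mul_le_mul hC hPmPKx (norm_nonneg _) hC0
  have h3 : ‖(PK - P) (LK x)‖ ≤ C * ϑ := by
    have hLKxnorm : ‖LK x‖ ≤ C := by
      calc ‖LK x‖ ≤ ‖LK‖ * ‖x‖ := LK.le_opNorm _
      _ = ‖LK‖ := by rw [hxnorm, mul_one]
      _ ≤ C := hC
    have hPKP : ‖PK - P‖ = ϑ := by rw [hϑdef, norm_sub_rev]
    calc ‖(PK - P) (LK x)‖ ≤ ‖PK - P‖ * ‖LK x‖ := (PK - P).le_opNorm _
    _ = ϑ * ‖LK x‖ := by rw [hPKP]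
    _ ≤ ϑ * C := mul_le_mul_of_nonneg_left hLKxnorm hϑ0
    _ = C * ϑ := mul_comm _ _
  have hmain : ‖lam - lamK‖ * ‖P x‖ ≤ ε * (1 + ϑ) + 2 * C * ϑ := by
    calc ‖lam - lamK‖ * ‖P x‖ = ‖(lam - lamK) • (P x)‖ := (norm_smul _ _).symm
    _ = ‖(L - LK) (P x) + LK ((P - PK) x) + (PK - P) (LK x)‖ := by rw [key]
    _ ≤ ‖(L - LK) (P x) + LK ((P - PK) x)‖ + ‖(PK - P) (LK x)‖ := norm_add_le _ _
    _ ≤ ‖(L - LK) (P x)‖ + ‖LK ((P - PK) x)‖ + ‖(PK - P) (LK x)‖ := by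
        have := norm_add_le ((L - LK) (P x)) (LK ((P - PK) x))
        linarith
    _ ≤ ε * (1 + ϑ) + 2 * C * ϑ := by linarith
  have h1ϑ : 0 < 1 - ϑ := by linarith
  rw [le_div_iff₀ h1ϑ]
  calc ‖lam - lamK‖ * (1 - ϑ) ≤ ‖lam - lamK‖ * ‖P x‖ :=
        mul_le_mul_of_nonneg_left hPx_lb (norm_nonneg _)
  _ ≤ ε * (1 + ϑ) + 2 * C * ϑ := hmain
end

section
/- Let Q, T, A be n×n complex matrices with AQ = QT + R, and set δ := ‖I − Q*Q‖, r := ‖R‖, C_A := ‖A‖ (spectral norms). Define S₀ := QTQ* and E := A − S₀. Then ‖E‖ ≤ r·√(1+δ) + C_A·δ. Moreover, if δ < 1 then Q is invertible with ‖Q‖ ≤ √(1+δ) and ‖Q^{-1}‖ ≤ (1−δ)^{-1/2}. -/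
open Matrix
/-- Spectral (ℓ²-operator) norm of a complex matrix. -/
noncomputable def opNorm {m n : Type*} [Fintype m] [Fintype n] [DecidableEq m] [DecidableEq n]
    (M : Matrix m n ℂ) : ℝ :=
  ‖LinearMap.toContinuousLinearMap (Matrix.toEuclideanLin M)‖

section SchurAux

open scoped Matrix.Norms.L2Operator Pointwise

variable {n : ℕ}

noncomputable instance matrixCStarAlgebra : CStarAlgebra (Matrix (Fin n) (Fin n) ℂ) := {}

lemma opNorm_eq_norm (M : Matrix (Fin n) (Fin n) ℂ) : opNorm M = ‖M‖ := rfl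

lemma matrix_norm_one_le : ‖(1 : Matrix (Fin n) (Fin n) ℂ)‖ ≤ 1 := by
  have h := CStarRing.norm_star_mul_self (x := (1 : Matrix (Fin n) (Fin n) ℂ))
  simp only [star_one, one_mul] at h
  nlinarith [norm_nonneg (1 : Matrix (Fin n) (Fin n) ℂ)]

lemma isSelfAdjoint_one_sub_mul_conjT (Q : Matrix (Fin n) (Fin n) ℂ) :
    _root_.IsSelfAdjoint ((1 : Matrix (Fin n) (Fin n) ℂ) - Q * Qᴴ) := by
  rw [_root_.IsSelfAdjoint]
  simp [star_eq_conjTranspose, conjTranspose_sub, conjTranspose_mul]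

lemma isSelfAdjoint_one_sub_conjT_mul (Q : Matrix (Fin n) (Fin n) ℂ) :
    _root_.IsSelfAdjoint ((1 : Matrix (Fin n) (Fin n) ℂ) - Qᴴ * Q) := by
  rw [_root_.IsSelfAdjoint]
  simp [star_eq_conjTranspose, conjTranspose_sub, conjTranspose_mul]

lemma norm_sq_le (Q : Matrix (Fin n) (Fin n) ℂ) :
    ‖Q‖ * ‖Q‖ ≤ 1 + ‖(1 : Matrix (Fin n) (Fin n) ℂ) - Qᴴ * Q‖ := by
  have h1 : ‖Q‖ * ‖Q‖ = ‖Qᴴ * Q‖ := (l2_opNorm_conjTranspose_mul_self Q).symm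
  have h3 : ‖Qᴴ * Q‖ ≤ ‖(1 : Matrix (Fin n) (Fin n) ℂ)‖ + ‖(1 : Matrix (Fin n) (Fin n) ℂ) - Qᴴ * Q‖ := by
    have := norm_sub_le (1 : Matrix (Fin n) (Fin n) ℂ) (1 - Qᴴ * Q)
    rwa [sub_sub_cancel] at this
  have := matrix_norm_one_le (n := n)
  linarith

lemma isUnit_of_isUnit_conjT_mul {Q : Matrix (Fin n) (Fin n) ℂ}
    (hu : IsUnit (Qᴴ * Q)) : IsUnit Q := by
  rw [Matrix.isUnit_iff_isUnit_det] at hu ⊢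
  rw [Matrix.det_mul] at hu
  exact isUnit_of_mul_isUnit_right hu

/-- Key lemma: `‖1 - Q Qᴴ‖ ≤ ‖1 - Qᴴ Q‖`. -/
lemma norm_one_sub_mul_conjT_le (Q : Matrix (Fin n) (Fin n) ℂ) :
    ‖(1 : Matrix (Fin n) (Fin n) ℂ) - Q * Qᴴ‖ ≤ ‖(1 : Matrix (Fin n) (Fin n) ℂ) - Qᴴ * Q‖ := by
  set X : Matrix (Fin n) (Fin n) ℂ := 1 - Qᴴ * Q with hX
  set P : Matrix (Fin n) (Fin n) ℂ := 1 - Q * Qᴴ with hP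
  by_cases hδ : ‖X‖ < 1
  · -- Q is invertible and P = Q X Q⁻¹
    have huQQ : IsUnit (Qᴴ * Q) := by
      have : Qᴴ * Q = 1 - X := by rw [hX, sub_sub_cancel]
      rw [this]
      exact isUnit_one_sub_of_norm_lt_one hδ
    have huQ : IsUnit Q := isUnit_of_isUnit_conjT_mul huQQ
    have hdet : IsUnit Q.det := (Matrix.isUnit_iff_isUnit_det Q).mp huQ
    have hQQinv : Q * Q⁻¹ = 1 := Matrix.mul_nonsing_inv Q hdet
    have hQinvQ : Q⁻¹ * Q = 1 := Matrix.nonsing_inv_mul Q hdet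
    have hconj : P = (↑huQ.unit : Matrix (Fin n) (Fin n) ℂ) * X * (↑huQ.unit⁻¹ : Matrix (Fin n) (Fin n) ℂ) := by
      have hcoe : (↑huQ.unit⁻¹ : Matrix (Fin n) (Fin n) ℂ) = Q⁻¹ :=
        (Matrix.inv_eq_left_inv (by simp [huQ.unit_spec, hQinvQ])).symm
      rw [hcoe, huQ.unit_spec, hP, hX]
      calc (1 : Matrix (Fin n) (Fin n) ℂ) - Q * Qᴴ
          = Q * Q⁻¹ - Q * (Qᴴ * (Q * Q⁻¹)) := by rw [hQQinv]; simp
        _ = Q * (1 - Qᴴ * Q) * Q⁻¹ := by noncomm_ring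
    have hspec : spectrum ℂ P = spectrum ℂ X := by
      rw [hconj]; exact spectrum.units_conjugate
    have h1 : (spectralRadius ℂ P).toReal = ‖P‖ :=
      (isSelfAdjoint_one_sub_mul_conjT Q).toReal_spectralRadius_complex_eq_norm
    have h2 : (spectralRadius ℂ X).toReal = ‖X‖ :=
      (isSelfAdjoint_one_sub_conjT_mul Q).toReal_spectralRadius_complex_eq_norm
    have : spectralRadius ℂ P = spectralRadius ℂ X := by
      unfold spectralRadius; rw [hspec]
    rw [← h1, ← h2, this]
  · -- ‖X‖ ≥ 1 : spectral bound
    push_neg at hδ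
    have hQsq : ‖Q‖ * ‖Q‖ ≤ 1 + ‖X‖ := norm_sq_le Q
    have hsaQQ : _root_.IsSelfAdjoint (Q * Qᴴ) := by
      rw [_root_.IsSelfAdjoint]
      simp [star_eq_conjTranspose, conjTranspose_mul]
    have key0 : ∀ z ∈ spectrum ℂ P, ‖z‖ ≤ ‖X‖ := by
      intro z hz
      have hz' : z ∈ (({1} : Set ℂ) - spectrum ℂ (Q * Qᴴ)) := by
        rw [spectrum.singleton_sub_eq]
        simpa [Algebra.algebraMap_eq_smul_one] using hz
      obtain ⟨o, ho, w, hw, hzw⟩ := Set.mem_sub.mp hz'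
      rw [Set.mem_singleton_iff] at ho
      subst ho
      -- w is real
      have hw_re : w = (w.re : ℂ) := hsaQQ.mem_spectrum_eq_re hw
      have hw_mem : (w.re : ℝ) ∈ spectrum ℝ (Q * Qᴴ) := by
        apply spectrum.of_algebraMap_mem ℂ
        have h' : (↑w.re : ℂ) ∈ spectrum ℂ (Q * Qᴴ) := hw_re ▸ hw
        simpa using h'
      have hw_nonneg : 0 ≤ w.re := by
        have hQQ : star Qᴴ * Qᴴ = Q * Qᴴ := by
          simp [star_eq_conjTranspose]
        refine spectrum_star_mul_self_nonneg (b := Qᴴ) w.re ?_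
        rw [hQQ]; exact hw_mem
      have hw_le : ‖w‖ ≤ ‖Q * Qᴴ‖ := by
        have h := spectrum.norm_le_norm_mul_of_mem hw
        have h1 : ‖Q * Qᴴ‖ * ‖(1 : Matrix (Fin n) (Fin n) ℂ)‖ ≤ ‖Q * Qᴴ‖ * 1 := by
          exact mul_le_mul_of_nonneg_left matrix_norm_one_le (norm_nonneg _)
        linarith
      have hQQh : ‖Q * Qᴴ‖ ≤ 1 + ‖X‖ := by
        calc ‖Q * Qᴴ‖ ≤ ‖Q‖ * ‖Qᴴ‖ := norm_mul_le _ _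
          _ = ‖Q‖ * ‖Q‖ := by rw [l2_opNorm_conjTranspose]
          _ ≤ 1 + ‖X‖ := hQsq
      have hwre_le : w.re ≤ 1 + ‖X‖ := by
        have : |w.re| ≤ ‖w‖ := by
          rw [hw_re]; simp [Complex.norm_real]
        calc w.re ≤ |w.re| := le_abs_self _
          _ ≤ ‖w‖ := this
          _ ≤ 1 + ‖X‖ := le_trans hw_le hQQh
      have hz_eq : z = ((1 - w.re : ℝ) : ℂ) := by
        rw [← hzw, hw_re]; simp
      rw [hz_eq, Complex.norm_real, Real.norm_eq_abs, abs_le]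
      constructor <;> linarith
    have hsr : spectralRadius ℂ P ≤ (‖X‖₊ : ENNReal) := by
      refine iSup₂_le fun z hz => ?_
      have := key0 z hz
      exact_mod_cast ENNReal.coe_le_coe.mpr (by exact_mod_cast this)
    rw [(isSelfAdjoint_one_sub_mul_conjT Q).spectralRadius_eq_nnnorm] at hsr
    exact_mod_cast ENNReal.coe_le_coe.mp hsr

end SchurAux

section Main

open scoped Matrix.Norms.L2Operator

/-- Certified Schur build: defects control `E = A - QTQ*` and the
conditioning of `Q`. -/
theorem schur_defect_bounds {n : ℕ} (A Q T R : Matrix (Fin n) (Fin n) ℂ)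
    (hSchur : A * Q = Q * T + R)
    (δ rsch CA : ℝ)
    (hδ : δ = opNorm ((1 : Matrix (Fin n) (Fin n) ℂ) - Qᴴ * Q))
    (hr : rsch = opNorm R) (hCA : CA = opNorm A) :
    opNorm (A - Q * T * Qᴴ) ≤ rsch * Real.sqrt (1 + δ) + CA * δ ∧
    (δ < 1 →
      IsUnit Q ∧
      opNorm Q ≤ Real.sqrt (1 + δ) ∧
      opNorm Q⁻¹ ≤ (Real.sqrt (1 - δ))⁻¹) := by
  rw [opNorm_eq_norm] at hδ hr hCA
  rw [opNorm_eq_norm, opNorm_eq_norm, opNorm_eq_norm]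
  have hδ0 : 0 ≤ δ := by rw [hδ]; exact norm_nonneg _
  have hr0 : 0 ≤ rsch := by rw [hr]; exact norm_nonneg _
  have hCA0 : 0 ≤ CA := by rw [hCA]; exact norm_nonneg _
  have hQ2 : ‖Q‖ * ‖Q‖ ≤ 1 + δ := by rw [hδ]; exact norm_sq_le Q
  have hQle : ‖Q‖ ≤ Real.sqrt (1 + δ) := by
    have h := Real.sqrt_le_sqrt hQ2
    rwa [Real.sqrt_mul_self (norm_nonneg Q)] at h
  constructor
  · -- part 1
    have hR : R = A * Q - Q * T := by rw [hSchur, add_sub_cancel_left]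
    have hE : A - Q * T * Qᴴ = R * Qᴴ + A * (1 - Q * Qᴴ) := by
      rw [hR]; noncomm_ring
    have hP : ‖(1 : Matrix (Fin n) (Fin n) ℂ) - Q * Qᴴ‖ ≤ δ :=
      by rw [hδ]; exact norm_one_sub_mul_conjT_le Q
    calc ‖A - Q * T * Qᴴ‖ = ‖R * Qᴴ + A * (1 - Q * Qᴴ)‖ := by rw [hE]
      _ ≤ ‖R * Qᴴ‖ + ‖A * (1 - Q * Qᴴ)‖ := norm_add_le _ _
      _ ≤ ‖R‖ * ‖Qᴴ‖ + ‖A‖ * ‖(1 : Matrix (Fin n) (Fin n) ℂ) - Q * Qᴴ‖ :=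
          add_le_add (norm_mul_le _ _) (norm_mul_le _ _)
      _ ≤ rsch * Real.sqrt (1 + δ) + CA * δ := by
          rw [l2_opNorm_conjTranspose, ← hr, ← hCA]
          exact add_le_add (mul_le_mul_of_nonneg_left hQle hr0)
            (mul_le_mul_of_nonneg_left hP hCA0)
  · -- part 2
    intro hδ1
    have huQQ : IsUnit (Qᴴ * Q) := by
      have h1 : Qᴴ * Q = 1 - ((1 : Matrix (Fin n) (Fin n) ℂ) - Qᴴ * Q) := by
        rw [sub_sub_cancel]
      rw [h1]
      exact isUnit_one_sub_of_norm_lt_one (by rw [← hδ]; exact hδ1)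
    have huQ : IsUnit Q := isUnit_of_isUnit_conjT_mul huQQ
    refine ⟨huQ, hQle, ?_⟩
    have hdet : IsUnit Q.det := (Matrix.isUnit_iff_isUnit_det Q).mp huQ
    have hQQinv : Q * Q⁻¹ = 1 := Matrix.mul_nonsing_inv Q hdet
    have hQinvQ : Q⁻¹ * Q = 1 := Matrix.nonsing_inv_mul Q hdet
    set Z : Matrix (Fin n) (Fin n) ℂ := Q⁻¹ * (Q⁻¹)ᴴ with hZ
    have h4 : (Q⁻¹)ᴴ * Qᴴ = 1 := by
      rw [← conjTranspose_mul, hQQinv, conjTranspose_one]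
    have hZ1 : Z * (Qᴴ * Q) = 1 := by
      calc Z * (Qᴴ * Q) = Q⁻¹ * ((Q⁻¹)ᴴ * Qᴴ) * Q := by rw [hZ]; noncomm_ring
        _ = 1 := by rw [h4, mul_one, hQinvQ]
    have hZeq : Z = 1 + Z * ((1 : Matrix (Fin n) (Fin n) ℂ) - Qᴴ * Q) := by
      have h5 : Z * ((1 : Matrix (Fin n) (Fin n) ℂ) - Qᴴ * Q) = Z - 1 := by
        rw [mul_sub, mul_one, hZ1]
      rw [h5]; abel
    have hZle : ‖Z‖ ≤ 1 + ‖Z‖ * δ := by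
      calc ‖Z‖ = ‖(1 : Matrix (Fin n) (Fin n) ℂ) + Z * (1 - Qᴴ * Q)‖ := by rw [← hZeq]
        _ ≤ ‖(1 : Matrix (Fin n) (Fin n) ℂ)‖ + ‖Z * (1 - Qᴴ * Q)‖ := norm_add_le _ _
        _ ≤ 1 + ‖Z‖ * ‖(1 : Matrix (Fin n) (Fin n) ℂ) - Qᴴ * Q‖ :=
            add_le_add matrix_norm_one_le (norm_mul_le _ _)
        _ = 1 + ‖Z‖ * δ := by rw [← hδ]
    have h1δ : 0 < 1 - δ := by linarith
    have hZfin : ‖Z‖ ≤ (1 - δ)⁻¹ := by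
      have h6 : ‖Z‖ * (1 - δ) ≤ 1 := by nlinarith [norm_nonneg Z]
      rw [← one_div, le_div_iff₀ h1δ]
      exact h6
    have hsq : ‖Q⁻¹‖ * ‖Q⁻¹‖ = ‖Z‖ := by
      have h7 := l2_opNorm_conjTranspose_mul_self ((Q⁻¹)ᴴ)
      rw [conjTranspose_conjTranspose, l2_opNorm_conjTranspose] at h7
      rw [hZ]
      exact h7.symm
    have h8 : ‖Q⁻¹‖ * ‖Q⁻¹‖ ≤ (1 - δ)⁻¹ := le_trans (le_of_eq hsq) hZfin
    calc ‖Q⁻¹‖ = Real.sqrt (‖Q⁻¹‖ * ‖Q⁻¹‖) := (Real.sqrt_mul_self (norm_nonneg _)).symm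
      _ ≤ Real.sqrt ((1 - δ)⁻¹) := Real.sqrt_le_sqrt h8
      _ = (Real.sqrt (1 - δ))⁻¹ := Real.sqrt_inv _

end Main
end

section
/- Let T be an n×n complex matrix, λ ∈ ℂ, ρ > 0, and let z_ℓ = λ + ρ·e^{2πiℓ/m} for ℓ = 0,…,m−1 be m equally spaced points on the circle Γ = {z : |z−λ| = ρ}. Suppose s_ℓ ≤ σ_min(z_ℓ I − T) for each ℓ, and set s* := min_ℓ s_ℓ − 2ρ·sin(π/(2m)). If s* > 0, then every z ∈ Γ satisfies σ_min(zI−T) ≥ s* > 0; in particular zI−T is invertible for all z ∈ Γ and sup_{z∈Γ} ‖(zI−T)^{-1}‖ ≤ 1/s*. -/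
open Matrix

/-- Smallest singular value of a square complex matrix, as the infimum of
`‖Mx‖` over the unit sphere. -/
noncomputable def smin {n : Type*} [Fintype n] [DecidableEq n] (M : Matrix n n ℂ) : ℝ :=
  ⨅ x : Metric.sphere (0 : EuclideanSpace ℂ n) 1,
    ‖Matrix.toEuclideanLin M (x : EuclideanSpace ℂ n)‖

/-!
Consecutive sample points are `2π/(m+1)` apart in angle, so every point of the circle lies
within chord distance `2ρ sin(π/(2(m+1)))` of one of them. Testing `σ_min(M)` on a unit vector
gives `σ_min(M) ≤ σ_min(N) + ‖M - N‖`, so `z ↦ σ_min(zI - T)` is 1-Lipschitz and the sampled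
bounds lose at most that chord length on the whole circle. A positive `σ_min` makes the
matrix injective, hence invertible, with `‖M⁻¹ x‖ ≤ ‖x‖ / σ_min(M)`.
-/

open Real

section SmallestSingularValue

variable {ι : Type*} [Fintype ι] [DecidableEq ι]

theorem smin_le_norm_toEuclideanLin (M : Matrix ι ι ℂ) {x : EuclideanSpace ℂ ι}
    (hx : ‖x‖ = 1) : smin M ≤ ‖M.toEuclideanLin x‖ :=
  ciInf_le ⟨0, by rintro _ ⟨y, rfl⟩; positivity⟩
    (⟨x, mem_sphere_zero_iff_norm.mpr hx⟩ : Metric.sphere _ 1)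

theorem smin_mul_norm_le (M : Matrix ι ι ℂ) (y : EuclideanSpace ℂ ι) :
    smin M * ‖y‖ ≤ ‖M.toEuclideanLin y‖ := by
  rcases eq_or_ne y 0 with rfl | hy
  · simp
  have hy' : 0 < ‖y‖ := norm_pos_iff.mpr hy
  have hunit : ‖(‖y‖⁻¹ : ℂ) • y‖ = 1 := by simp [norm_smul, hy'.ne']
  have h := smin_le_norm_toEuclideanLin M hunit
  rw [map_smul, norm_smul, norm_inv, Complex.norm_real, Real.norm_of_nonneg hy'.le] at h
  rw [mul_comm]
  exact (le_inv_mul_iff₀ hy').mp h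

theorem smin_le_add_opNorm_sub (M N : Matrix ι ι ℂ) : smin M ≤ smin N + opNorm (M - N) := by
  have hnorm : 0 ≤ opNorm (M - N) := norm_nonneg _
  cases isEmpty_or_nonempty ι
  · have hempty : ∀ A : Matrix ι ι ℂ, smin A = 0 := fun A => by
      have : IsEmpty (Metric.sphere (0 : EuclideanSpace ℂ ι) 1) :=
        ⟨fun x => by simpa [Subsingleton.elim (x : EuclideanSpace ℂ ι) 0] using x.2⟩
      exact Real.iInf_of_isEmpty _
    simpa [hempty] using hnorm
  have : Nonempty (Metric.sphere (0 : EuclideanSpace ℂ ι) 1) :=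
    (NormedSpace.sphere_nonempty.mpr zero_le_one).to_subtype
  rw [← sub_le_iff_le_add]
  refine le_ciInf ?_
  rintro ⟨x, hx⟩
  have hx1 : ‖x‖ = 1 := mem_sphere_zero_iff_norm.mp hx
  have hdiff : ‖(M - N).toEuclideanLin x‖ ≤ opNorm (M - N) := by
    have := (LinearMap.toContinuousLinearMap (M - N).toEuclideanLin).le_opNorm x
    rwa [hx1, mul_one, LinearMap.coe_toContinuousLinearMap'] at this
  have hsplit : M.toEuclideanLin x = N.toEuclideanLin x + (M - N).toEuclideanLin x := by simp
  have hM := smin_le_norm_toEuclideanLin M hx1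
  rw [hsplit] at hM
  linarith [norm_add_le (N.toEuclideanLin x) ((M - N).toEuclideanLin x)]

theorem opNorm_smul_one_le (c : ℂ) : opNorm (c • (1 : Matrix ι ι ℂ)) ≤ ‖c‖ :=
  ContinuousLinearMap.opNorm_le_bound _ (norm_nonneg c) fun x => by simp [norm_smul]

theorem lipschitzWith_smin_smul_one_sub (T : Matrix ι ι ℂ) :
    LipschitzWith 1 fun z : ℂ => smin (z • (1 : Matrix ι ι ℂ) - T) :=
  LipschitzWith.of_le_add fun z w => by
    calc smin (z • 1 - T) ≤ smin (w • 1 - T) + opNorm ((z • 1 - T) - (w • 1 - T)) :=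
          smin_le_add_opNorm_sub _ _
      _ ≤ smin (w • 1 - T) + dist z w := by
          rw [sub_sub_sub_cancel_right, ← sub_smul, dist_eq_norm]
          gcongr
          exact opNorm_smul_one_le _

theorem isUnit_of_smin_pos {M : Matrix ι ι ℂ} (h : 0 < smin M) : IsUnit M := by
  refine Matrix.mulVec_injective_iff_isUnit.mp fun v w hvw => ?_
  have hker := smin_mul_norm_le M (WithLp.toLp 2 (v - w))
  rw [Matrix.toLpLin_toLp, Matrix.toLin'_apply, Matrix.mulVec_sub, hvw, sub_self,
    WithLp.toLp_zero, norm_zero] at hker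
  have hzero := norm_le_zero_iff.mp (nonpos_of_mul_nonpos_right hker h)
  exact sub_eq_zero.mp (congrArg WithLp.ofLp hzero)

theorem opNorm_inv_le {M : Matrix ι ι ℂ} (h : 0 < smin M) : opNorm M⁻¹ ≤ 1 / smin M := by
  refine ContinuousLinearMap.opNorm_le_bound _ (by positivity) fun x => ?_
  have hinv : M.toEuclideanLin (M⁻¹.toEuclideanLin x) = x := by
    rw [← LinearMap.comp_apply, ← Matrix.toLpLin_mul_same, Matrix.mul_nonsing_inv _
      ((Matrix.isUnit_iff_isUnit_det M).mp (isUnit_of_smin_pos h)), Matrix.toLpLin_one]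
    rfl
  have := smin_mul_norm_le M (M⁻¹.toEuclideanLin x)
  rw [hinv] at this
  rw [LinearMap.coe_toContinuousLinearMap', div_mul_eq_mul_div, one_mul, le_div_iff₀ h, mul_comm]
  exact this

end SmallestSingularValue

theorem dist_circleMap_circleMap (c : ℂ) (R θ φ : ℝ) :
    dist (circleMap c R θ) (circleMap c R φ) = |R| * (2 * |sin ((θ - φ) / 2)|) := by
  have hsplit : circleMap c R θ - circleMap c R φ
      = R * Complex.exp (φ * Complex.I) * (Complex.exp (Complex.I * ↑(θ - φ)) - 1) := by
    rw [mul_sub, mul_assoc, ← Complex.exp_add, circleMap, circleMap]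
    push_cast
    ring_nf
  rw [dist_eq_norm, hsplit, norm_mul, norm_mul, Complex.norm_exp_I_mul_ofReal_sub_one,
    Complex.norm_exp_ofReal_mul_I, Complex.norm_real, norm_mul, Real.norm_eq_abs,
    Real.norm_eq_abs, Real.norm_eq_abs, abs_two, mul_one]

theorem abs_sin_le_sin_of_abs_le {u B : ℝ} (hu : |u| ≤ B) (hB : B ≤ π / 2) :
    |sin u| ≤ sin B := by
  rw [abs_sin_eq_sin_abs_of_abs_le_pi (by linarith [pi_pos])]
  exact sin_le_sin_of_le_of_le_pi_div_two (by linarith [abs_nonneg u, pi_pos]) hB hu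

theorem dist_circleMap_le {c : ℂ} {R θ φ δ : ℝ} (h : |θ - φ| ≤ δ) (hδ : δ ≤ π) :
    dist (circleMap c R θ) (circleMap c R φ) ≤ 2 * |R| * sin (δ / 2) := by
  have hsin : |sin ((θ - φ) / 2)| ≤ sin (δ / 2) :=
    abs_sin_le_sin_of_abs_le (by rw [abs_div, abs_two]; linarith) (by linarith)
  rw [dist_circleMap_circleMap]
  nlinarith [abs_nonneg R]

theorem exists_int_abs_sub_mul_le (θ : ℝ) {h : ℝ} (hh : 0 < h) :
    ∃ k : ℤ, |θ - k * h| ≤ h / 2 := by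
  refine ⟨round (θ / h), ?_⟩
  have := abs_sub_round (θ / h)
  calc |θ - round (θ / h) * h| = |θ / h - round (θ / h)| * h := by
        rw [← abs_of_pos hh, ← abs_mul, abs_of_pos hh, sub_mul, div_mul_cancel₀ _ hh.ne']
    _ ≤ 1 / 2 * h := by gcongr
    _ = h / 2 := by ring

theorem exists_dist_circleMap_sample_le (c : ℂ) (R θ : ℝ) {N : ℕ} (hN : 0 < N) :
    ∃ ℓ : Fin N, dist (circleMap c R θ) (circleMap c R (2 * π * ℓ / N))
      ≤ 2 * |R| * sin (π / (2 * N)) := by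
  have hN' : (0 : ℝ) < N := by exact_mod_cast hN
  obtain ⟨k, hk⟩ := exists_int_abs_sub_mul_le θ (by positivity : 0 < 2 * π / N)
  have hr : 0 ≤ k % N := Int.emod_nonneg k (by omega)
  have hr' : k % N < N := Int.emod_lt_of_pos k (by omega)
  refine ⟨⟨(k % N).toNat, by omega⟩, ?_⟩
  -- only `k mod N` matters, by `2π`-periodicity of `circleMap`
  have hsample : circleMap c R (2 * π * ((k % N).toNat : ℕ) / N)
      = circleMap c R (k * (2 * π / N)) := by
    rw [← (periodic_circleMap c R).int_mul (k / N)]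
    congr 1
    have hdiv : ((k % N : ℤ) : ℝ) + N * (k / N : ℤ) = k := by
      exact_mod_cast Int.emod_add_mul_ediv k N
    have hℓ : (((k % N).toNat : ℕ) : ℝ) = ((k % N : ℤ) : ℝ) := by
      exact_mod_cast Int.toNat_of_nonneg hr
    rw [hℓ, ← hdiv]
    field_simp
  have hδ : 2 * π / N / 2 ≤ π := by
    have hN1 : (1 : ℝ) ≤ N := by exact_mod_cast hN
    calc 2 * π / N / 2 = π / N := by ring
      _ ≤ π := div_le_self pi_pos.le hN1
  rw [Fin.val_mk, hsample]
  calc dist (circleMap c R θ) (circleMap c R (k * (2 * π / N)))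
      ≤ 2 * |R| * sin (2 * π / N / 2 / 2) := dist_circleMap_le hk hδ
    _ = 2 * |R| * sin (π / (2 * N)) := by ring_nf

/-- Certified resolvent bound on a sampled circle: `m+1` equally spaced sample
points with certified lower bounds `s_ℓ ≤ σ_min(z_ℓ I - T)` and Lipschitz
propagation give a uniform lower bound `s* > 0` for `σ_min(zI - T)` on the whole
circle, hence invertibility and `‖(zI-T)⁻¹‖ ≤ 1/s*`. -/
theorem sampled_circle_resolvent_bound {n m : ℕ}
    (T : Matrix (Fin n) (Fin n) ℂ) (lam : ℂ) (ρ : ℝ) (hρ : 0 < ρ)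
    (s : Fin (m + 1) → ℝ)
    (hs : ∀ ℓ : Fin (m + 1),
      s ℓ ≤ smin ((lam + ρ * Complex.exp (2 * Real.pi * Complex.I * ((ℓ : ℕ) : ℂ) / ((m : ℂ) + 1)))
        • (1 : Matrix (Fin n) (Fin n) ℂ) - T))
    (hpos : 0 < Finset.univ.inf' Finset.univ_nonempty s
        - 2 * ρ * Real.sin (Real.pi / (2 * ((m : ℝ) + 1)))) :
    ∀ z : ℂ, ‖z - lam‖ = ρ →
      Finset.univ.inf' Finset.univ_nonempty s
          - 2 * ρ * Real.sin (Real.pi / (2 * ((m : ℝ) + 1)))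
        ≤ smin (z • (1 : Matrix (Fin n) (Fin n) ℂ) - T) ∧
      IsUnit (z • (1 : Matrix (Fin n) (Fin n) ℂ) - T) ∧
      opNorm ((z • (1 : Matrix (Fin n) (Fin n) ℂ) - T)⁻¹)
        ≤ 1 / (Finset.univ.inf' Finset.univ_nonempty s
            - 2 * ρ * Real.sin (Real.pi / (2 * ((m : ℝ) + 1)))) := by
  intro z hz
  obtain ⟨θ, rfl⟩ : z ∈ Set.range (circleMap lam ρ) := by
    rwa [range_circleMap, abs_of_pos hρ, mem_sphere_iff_norm]
  obtain ⟨ℓ, hclose⟩ := exists_dist_circleMap_sample_le lam ρ θ m.succ_pos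
  have hsample : circleMap lam ρ (2 * π * ℓ / (m + 1 : ℕ))
      = lam + ρ * Complex.exp (2 * Real.pi * Complex.I * ((ℓ : ℕ) : ℂ) / ((m : ℂ) + 1)) := by
    simp only [circleMap]
    push_cast
    ring_nf
  have hlip := (lipschitzWith_smin_smul_one_sub T).le_add_mul
    (circleMap lam ρ (2 * π * ℓ / (m + 1 : ℕ))) (circleMap lam ρ θ)
  rw [NNReal.coe_one, one_mul, hsample] at hlip
  rw [dist_comm, hsample, abs_of_pos hρ, Nat.cast_succ] at hclose
  have hbound : Finset.univ.inf' Finset.univ_nonempty s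
      - 2 * ρ * Real.sin (Real.pi / (2 * ((m : ℝ) + 1)))
      ≤ smin (circleMap lam ρ θ • (1 : Matrix (Fin n) (Fin n) ℂ) - T) := by
    linarith [Finset.inf'_le s (Finset.mem_univ ℓ), hs ℓ]
  have hsmin_pos := hpos.trans_le hbound
  exact ⟨hbound, isUnit_of_smin_pos hsmin_pos,
    (opNorm_inv_le hsmin_pos).trans (one_div_le_one_div_of_le hpos hbound)⟩
end
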